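/- Let ω₀ be a classically positive linear functional on C^∞(M) and S a square-preserving map with respect to a Hermitian star product ⋆ on M. Then ω := ω₀ ∘ S is a positive ℂ[[ħ]]-linear functional on (C^∞(M)[[ħ]], ⋆): ω(conj(f) ⋆ f) ≥ 0 in ℝ[[ħ]] for all f. -/

import Mathlib

noncomputable section

def FormalNonneg (a : ℕ → ℝ) : Prop :=
  (∀ r, a r = 0) ∨ ∃ n, 0 < a n ∧ ∀ m < n, a m = 0

def SeriesNonneg (a : ℕ → ℂ) : Prop :=
  (∀ r, (a r).im = 0) ∧ FormalNonneg fun r => (a r).re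

variable {X : Type*}

/-- Coefficientwise complex conjugation of a formal series of functions. -/
def starSeries (u : ℕ → X → ℂ) : ℕ → X → ℂ := fun r => star (u r)

/-- Star product of formal series of functions, for the star product with
bidifferential coefficients `C`. -/
def starMul (C : ℕ → (X → ℂ) → (X → ℂ) → (X → ℂ)) (u v : ℕ → X → ℂ) :
    ℕ → X → ℂ :=
  fun r => ∑ p ∈ Finset.HasAntidiagonal.antidiagonal r, ∑ q ∈ Finset.HasAntidiagonal.antidiagonal p.2,
    C p.1 (u q.1) (v q.2)

/-- A formal series of operators `T = Σ ħ^a T_a` applied to a formal series. -/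
def applySeries (T : ℕ → ((X → ℂ) →ₗ[ℂ] (X → ℂ))) (u : ℕ → X → ℂ) :
    ℕ → X → ℂ :=
  fun r => ∑ p ∈ Finset.HasAntidiagonal.antidiagonal r, T p.1 (u p.2)

/-- Pointwise (undeformed) product of formal series of functions. -/
def seriesMul (u v : ℕ → X → ℂ) : ℕ → X → ℂ :=
  fun r => ∑ p ∈ Finset.HasAntidiagonal.antidiagonal r, u p.1 * v p.2

/- ### Auxiliary lemmas -/

lemma formalNonneg_add {a b : ℕ → ℝ} (ha : FormalNonneg a) (hb : FormalNonneg b) :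
    FormalNonneg (fun r => a r + b r) := by
  rcases ha with ha | ⟨n, hn, hn'⟩
  · rcases hb with hb | ⟨m, hm, hm'⟩
    · exact Or.inl fun r => by simp [ha, hb]
    · exact Or.inr ⟨m, by simpa [ha] using hm, fun r hr => by simp [ha, hm' r hr]⟩
  · rcases hb with hb | ⟨m, hm, hm'⟩
    · exact Or.inr ⟨n, by simpa [hb] using hn, fun r hr => by simp [hb, hn' r hr]⟩
    · rcases lt_trichotomy n m with h | h | h
      · exact Or.inr ⟨n, by simpa [hm' n h] using hn,
          fun r hr => by simp [hn' r hr, hm' r (hr.trans h)]⟩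
      · subst h
        exact Or.inr ⟨n, add_pos hn hm, fun r hr => by simp [hn' r hr, hm' r hr]⟩
      · exact Or.inr ⟨m, by simpa [hn' m h] using hm,
          fun r hr => by simp [hm' r hr, hn' r (hr.trans h)]⟩

lemma formalNonneg_shift {a : ℕ → ℝ} (j : ℕ) (ha : FormalNonneg a) :
    FormalNonneg (fun m => if j ≤ m then a (m - j) else 0) := by
  rcases ha with ha | ⟨n, hn, hn'⟩
  · exact Or.inl fun m => by simp [ha]
  · refine Or.inr ⟨n + j, by simpa using hn, fun m hm => ?_⟩
    by_cases h : j ≤ m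
    · simp only [if_pos h]
      exact hn' (m - j) (by omega)
    · simp [h]

lemma formalNonneg_sum {ι : Type*} (s : Finset ι) (a : ι → ℕ → ℝ)
    (h : ∀ i ∈ s, FormalNonneg (a i)) :
    FormalNonneg (fun m => ∑ i ∈ s, a i m) := by
  classical
  induction s using Finset.induction_on with
  | empty => exact Or.inl fun m => by simp
  | insert _ _ hx ih =>
      simp only [Finset.sum_insert hx]
      exact formalNonneg_add (h _ (Finset.mem_insert_self _ _))
        (ih fun i hi => h i (Finset.mem_insert_of_mem hi))

lemma seriesNonneg_sum {ι : Type*} (s : Finset ι) (a : ι → ℕ → ℂ)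
    (h : ∀ i ∈ s, SeriesNonneg (a i)) :
    SeriesNonneg (fun m => ∑ i ∈ s, a i m) := by
  constructor
  · intro r
    rw [Complex.im_sum]
    exact Finset.sum_eq_zero fun i hi => (h i hi).1 r
  · have := formalNonneg_sum s (fun i m => (a i m).re) (fun i hi => (h i hi).2)
    simpa [Complex.re_sum] using this

lemma expand_sq (c d : ℂ) (f g : X → ℂ) :
    star ((c • f) + (d • g)) * ((c • f) + (d • g)) =
      (star c * c) • (star f * f) + (star c * d) • (star f * g) +
      (star d * c) • (star g * f) + (star d * d) • (star g * g) := by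
  funext x
  simp only [Pi.add_apply, Pi.mul_apply, Pi.smul_apply, Pi.star_apply, smul_eq_mul,
    star_add, star_mul', Complex.star_def, map_mul]
  ring

lemma omega_herm (ω₀ : (X → ℂ) →ₗ[ℂ] ℂ)
    (hω₀ : ∀ f : X → ℂ, (ω₀ (star f * f)).im = 0 ∧ 0 ≤ (ω₀ (star f * f)).re)
    (f g : X → ℂ) :
    ω₀ (star g * f) = (starRingEnd ℂ) (ω₀ (star f * g)) := by
  have e1 := expand_sq 1 1 f g
  have e2 := expand_sq 1 Complex.I f g
  simp only [one_smul, star_one, one_mul, mul_one, Complex.star_def, Complex.conj_I] at e1 e2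
  have h1 := (hω₀ (f + g)).1
  rw [e1] at h1
  have h2 := (hω₀ (f + Complex.I • g)).1
  rw [e2] at h2
  simp only [map_add, map_smul, Complex.add_im, (hω₀ f).1, (hω₀ g).1, smul_eq_mul,
    Complex.mul_im, Complex.I_re, Complex.I_im, Complex.neg_re, Complex.neg_im,
    neg_mul, neg_neg, mul_one, mul_zero, zero_mul, one_mul, zero_add, add_zero,
    neg_zero] at h1 h2
  apply Complex.ext
  · simp only [Complex.conj_re]; linarith
  · simp only [Complex.conj_im]; linarith

lemma omega_degenerate (ω₀ : (X → ℂ) →ₗ[ℂ] ℂ)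
    (hω₀ : ∀ f : X → ℂ, (ω₀ (star f * f)).im = 0 ∧ 0 ≤ (ω₀ (star f * f)).re)
    (f g : X → ℂ) (hf : ω₀ (star f * f) = 0) :
    ω₀ (star f * g) = 0 := by
  set A := ω₀ (star f * g) with hA
  by_contra hA0
  set R := (ω₀ (star g * g)).re with hR
  set t : ℝ := -(R + 2) / 2 with ht
  have key := (hω₀ ((t : ℂ) • f + (starRingEnd ℂ A) • g)).2
  rw [expand_sq] at key
  have hgf : ω₀ (star g * f) = (starRingEnd ℂ) A := omega_herm ω₀ hω₀ f g
  simp only [map_add, map_smul, hf, hgf, smul_eq_mul, mul_zero] at key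
  simp only [Complex.star_def, Complex.conj_conj, Complex.conj_ofReal, mul_zero, zero_add] at key
  have h1 : (t:ℂ) * (starRingEnd ℂ) A * A = ((t * Complex.normSq A : ℝ) : ℂ) := by
    push_cast; rw [mul_assoc, mul_comm ((starRingEnd ℂ) A) A, Complex.mul_conj]
  have h2 : A * (t:ℂ) * (starRingEnd ℂ) A = ((t * Complex.normSq A : ℝ) : ℂ) := by
    push_cast; rw [mul_comm A (t:ℂ), mul_assoc, Complex.mul_conj]
  have h3 : A * (starRingEnd ℂ) A * ω₀ (star g * g)
      = ((Complex.normSq A : ℝ):ℂ) * ω₀ (star g * g) := by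
    rw [Complex.mul_conj]
  rw [h1, h2, h3] at key
  simp only [Complex.add_re, Complex.ofReal_re, Complex.mul_re, Complex.ofReal_im,
    zero_mul, sub_zero, (hω₀ g).1, mul_zero] at key
  have hpos : 0 < Complex.normSq A := Complex.normSq_pos.mpr hA0
  rw [← hR] at key
  nlinarith [key, hpos]

lemma omega_base (ω₀ : (X → ℂ) →ₗ[ℂ] ℂ)
    (hω₀ : ∀ f : X → ℂ, (ω₀ (star f * f)).im = 0 ∧ 0 ≤ (ω₀ (star f * f)).re)
    (g : ℕ → X → ℂ) :
    SeriesNonneg (fun m => ∑ p ∈ Finset.HasAntidiagonal.antidiagonal m, ω₀ (star (g p.1) * g p.2)) := by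
  constructor
  · intro m
    have hconj : (starRingEnd ℂ) (∑ p ∈ Finset.HasAntidiagonal.antidiagonal m, ω₀ (star (g p.1) * g p.2))
        = ∑ p ∈ Finset.HasAntidiagonal.antidiagonal m, ω₀ (star (g p.1) * g p.2) := by
      rw [map_sum]
      have hc : ∀ p ∈ Finset.HasAntidiagonal.antidiagonal m,
          (starRingEnd ℂ) (ω₀ (star (g p.1) * g p.2)) = ω₀ (star (g p.2) * g p.1) := by
        intro p _
        rw [omega_herm ω₀ hω₀ (g p.2) (g p.1), Complex.conj_conj]
      exact (Finset.sum_congr rfl hc).trans (Finset.Nat.sum_antidiagonal_swap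
        (f := fun q => ω₀ (star (g q.1) * g q.2)))
    exact Complex.conj_eq_iff_im.mp hconj
  · by_cases hz : ∀ a, ω₀ (star (g a) * g a) = 0
    · left
      intro m
      have hzero : ∑ p ∈ Finset.HasAntidiagonal.antidiagonal m, ω₀ (star (g p.1) * g p.2) = 0 :=
        Finset.sum_eq_zero fun p _ =>
          omega_degenerate ω₀ hω₀ (g p.1) (g p.2) (hz p.1)
      simp only [hzero, Complex.zero_re]
    · push_neg at hz
      set n := Nat.find hz with hndef
      have hn : ω₀ (star (g n) * g n) ≠ 0 := Nat.find_spec hz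
      have hmin : ∀ m < n, ω₀ (star (g m) * g m) = 0 :=
        fun m hm => not_not.mp (Nat.find_min hz hm)
      have vanish : ∀ a b, a < n ∨ b < n → ω₀ (star (g a) * g b) = 0 := by
        rintro a b (h | h)
        · exact omega_degenerate ω₀ hω₀ (g a) (g b) (hmin a h)
        · rw [omega_herm ω₀ hω₀ (g b) (g a),
            omega_degenerate ω₀ hω₀ (g b) (g a) (hmin b h), map_zero]
      right
      refine ⟨2 * n, ?_, ?_⟩
      · have hsum : ∑ p ∈ Finset.HasAntidiagonal.antidiagonal (2 * n), ω₀ (star (g p.1) * g p.2)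
            = ω₀ (star (g n) * g n) := by
          apply Finset.sum_eq_single_of_mem (n, n)
          · rw [Finset.HasAntidiagonal.mem_antidiagonal]; omega
          · intro p hp hne
            have h1 := Finset.HasAntidiagonal.mem_antidiagonal.mp hp
            rcases Nat.lt_trichotomy p.1 n with hlt | heq | hgt
            · exact vanish p.1 p.2 (Or.inl hlt)
            · exact absurd (Prod.ext heq (by omega)) hne
            · exact vanish p.1 p.2 (Or.inr (by omega))
        simp only [hsum]
        rcases (hω₀ (g n)).2.lt_or_eq with h | h
        · exact h
        · exact absurd (Complex.ext (by simp [← h]) (by simp [(hω₀ (g n)).1])) hn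
      · intro m hm
        simp only
        have hzero : ∑ p ∈ Finset.HasAntidiagonal.antidiagonal m, ω₀ (star (g p.1) * g p.2) = 0 := by
          apply Finset.sum_eq_zero
          intro p hp
          have := Finset.HasAntidiagonal.mem_antidiagonal.mp hp
          exact vanish p.1 p.2 (by omega)
        rw [hzero]
        simp

lemma seriesNonneg_combine (d : ℕ → ℕ → ℂ) (hd : ∀ j, SeriesNonneg (d j)) :
    SeriesNonneg (fun r => ∑ p ∈ Finset.HasAntidiagonal.antidiagonal r, d p.1 p.2) := by
  constructor
  · intro r
    rw [Complex.im_sum]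
    exact Finset.sum_eq_zero fun p _ => (hd p.1).1 p.2
  · have hre : (fun r => (∑ p ∈ Finset.HasAntidiagonal.antidiagonal r, d p.1 p.2).re)
        = fun r => ∑ p ∈ Finset.HasAntidiagonal.antidiagonal r, (d p.1 p.2).re :=
      funext fun r => Complex.re_sum _ _
    rw [hre]
    set a : ℕ → ℝ := fun r => ∑ p ∈ Finset.HasAntidiagonal.antidiagonal r, (d p.1 p.2).re with ha
    by_cases hz : ∀ r, a r = 0
    · exact Or.inl hz
    · push_neg at hz
      set n := Nat.find hz with hndef
      have hnne : a n ≠ 0 := Nat.find_spec hz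
      have hmin : ∀ m < n, a m = 0 := fun m hm => not_not.mp (Nat.find_min hz hm)
      set s : ℕ → ℝ :=
        fun m => ∑ j ∈ Finset.range (n + 1), (if j ≤ m then (d j (m - j)).re else 0) with hs
      have hsform : FormalNonneg s :=
        formalNonneg_sum _ _ (fun j _ => formalNonneg_shift j (hd j).2)
      have hsa : ∀ m ≤ n, s m = a m := by
        intro m hm
        rw [ha, hs]
        simp only
        rw [Finset.Nat.sum_antidiagonal_eq_sum_range_succ (fun i j => (d i j).re) m]
        rw [← Finset.sum_range_add_sum_Ico _ (Nat.succ_le_succ hm)]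
        have h1 : ∑ j ∈ Finset.range (m + 1), (if j ≤ m then (d j (m - j)).re else 0)
            = ∑ j ∈ Finset.range (m + 1), (d j (m - j)).re :=
          Finset.sum_congr rfl fun j hj =>
            if_pos (Nat.lt_succ_iff.mp (Finset.mem_range.mp hj))
        have h2 : ∑ j ∈ Finset.Ico (m + 1) (n + 1), (if j ≤ m then (d j (m - j)).re else 0)
            = 0 :=
          Finset.sum_eq_zero fun j hj => if_neg (by
            have := (Finset.mem_Ico.mp hj).1; omega)
        rw [h1, h2, add_zero]
      rcases hsform with h0 | ⟨n', hn', hn''⟩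
      · exact absurd ((hsa n le_rfl).symm.trans (h0 n)) hnne
      · have hnn' : n' = n := by
          by_contra hne
          rcases Nat.lt_or_ge n' n with h | h
          · rw [hsa n' h.le] at hn'
            exact absurd (hmin n' h) (ne_of_gt hn')
          · exact hnne ((hsa n le_rfl).symm.trans
              (hn'' n (lt_of_le_of_ne h (Ne.symm hne))))
        subst hnn'
        exact Or.inr ⟨n, by rwa [hsa n le_rfl] at hn', hmin⟩

/-- If `ω₀` is a classically positive linear functional and `S`
is a square-preserving map with respect to a Hermitian star product `⋆`, then
`ω := ω₀ ∘ S` is a positive `ℂ[[ħ]]`-linear functional on the deformed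
algebra: `ω(conj f ⋆ f) ≥ 0` in `ℝ[[ħ]]` for all formal series `f`. -/
theorem deformed_functional_positive {X : Type*}
    (C : ℕ → (X → ℂ) → (X → ℂ) → (X → ℂ))
    (hC0 : ∀ f g : X → ℂ, C 0 f g = f * g)
    (hherm : ∀ (r : ℕ) (f g : X → ℂ), star (C r f g) = C r (star g) (star f))
    (S : ℕ → ((X → ℂ) →ₗ[ℂ] (X → ℂ)))
    (hS0 : S 0 = LinearMap.id)
    (hS1 : ∀ r : ℕ, S r 1 = if r = 0 then 1 else 0)
    (hSstar : ∀ (r : ℕ) (f : X → ℂ), S r (star f) = star (S r f))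
    (k : ℕ → ℕ)
    (D : (r : ℕ) → Fin (k r) → (ℕ → ((X → ℂ) →ₗ[ℂ] (X → ℂ))))
    (hSq : ∀ (u v : ℕ → X → ℂ) (m : ℕ),
      applySeries S (starMul C (starSeries u) v) m =
        ∑ p ∈ Finset.HasAntidiagonal.antidiagonal m, ∑ I : Fin (k p.1),
          seriesMul (starSeries (applySeries (D p.1 I) u))
            (applySeries (D p.1 I) v) p.2)
    (ω₀ : (X → ℂ) →ₗ[ℂ] ℂ)
    (hω₀ : ∀ f : X → ℂ, (ω₀ (star f * f)).im = 0 ∧ 0 ≤ (ω₀ (star f * f)).re) :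
    ∀ f : ℕ → X → ℂ,
      SeriesNonneg fun r =>
        ω₀ (applySeries S (starMul C (starSeries f) f) r) := by
  intro f
  have key : (fun r => ω₀ (applySeries S (starMul C (starSeries f) f) r)) =
      fun r => ∑ p ∈ Finset.HasAntidiagonal.antidiagonal r,
        (fun j m => ∑ I : Fin (k j),
          ω₀ (seriesMul (starSeries (applySeries (D j I) f))
            (applySeries (D j I) f) m)) p.1 p.2 := by
    funext r
    rw [hSq f f r, map_sum]
    exact Finset.sum_congr rfl fun p _ => map_sum ω₀ _ _
  rw [key]
  refine seriesNonneg_combine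
    (fun j m => ∑ I : Fin (k j),
      ω₀ (seriesMul (starSeries (applySeries (D j I) f)) (applySeries (D j I) f) m))
    fun j => ?_
  apply seriesNonneg_sum
  intro I _
  have hrw : (fun m => ω₀ (seriesMul (starSeries (applySeries (D j I) f))
      (applySeries (D j I) f) m))
      = fun m => ∑ p ∈ Finset.HasAntidiagonal.antidiagonal m,
          ω₀ (star ((applySeries (D j I) f) p.1) * (applySeries (D j I) f) p.2) := by
    funext m
    simp only [seriesMul, starSeries]
    rw [map_sum]
  rw [hrw]
  exact omega_base ω₀ hω₀ _

end
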